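/- arXiv:2507.21655 — 6 statements merged into one kernel-verified Lean document; each statement's English description precedes it below -/
import Mathlib

section
/- For every κ > 0 there exists a function h : ℝ → ℝ which is infinitely differentiable, has compact support contained in [0, ∞), and satisfies ∫_{-1}^{1} (A_h(ξ)² − B_h(ξ)²) / (ξ² + κ) dξ < 0. -/
open MeasureTheory

/-- `A_h(ξ) = ∫ h(x) cos(ξx) dx`, the real part of the Fourier transform of `h`. -/
noncomputable def fourierCos (h : ℝ → ℝ) (ξ : ℝ) : ℝ := ∫ x : ℝ, h x * Real.cos (ξ * x)

/-- `B_h(ξ) = ∫ h(x) sin(ξx) dx`, the imaginary part of the Fourier transform of `h`. -/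
noncomputable def fourierSin (h : ℝ → ℝ) (ξ : ℝ) : ℝ := ∫ x : ℝ, h x * Real.sin (ξ * x)

noncomputable def myBump : ContDiffBump (1/4 : ℝ) := ⟨1/8, 1/4, by norm_num, by norm_num⟩

noncomputable def gfun : ℝ → ℝ := fun x => myBump x - myBump (-x)

noncomputable def hfun : ℝ → ℝ := fun x => gfun (x - 1/2)

noncomputable def Sfun (ξ : ℝ) : ℝ := ∫ y : ℝ, gfun y * Real.sin (ξ * y)

lemma myBump_mem (x : ℝ) (hx : (myBump : ℝ → ℝ) x ≠ 0) : x ∈ Set.Ioo 0 (1/2) := by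
  have h1 : x ∈ Function.support (myBump : ℝ → ℝ) := hx
  rw [myBump.support_eq, Real.ball_eq_Ioo] at h1
  have h2 : myBump.rOut = 1/4 := rfl
  rw [h2] at h1
  constructor <;> [linarith [h1.1]; linarith [h1.2]]

lemma myBump_ball (x : ℝ) (hx : x ∈ Set.Ioo (0:ℝ) (1/2)) : (myBump : ℝ → ℝ) x ≠ 0 := by
  rw [← Function.mem_support, myBump.support_eq, Real.ball_eq_Ioo]
  have h2 : myBump.rOut = 1/4 := rfl
  rw [h2]
  constructor <;> [linarith [hx.1]; linarith [hx.2]]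

lemma gfun_odd (x : ℝ) : gfun (-x) = - gfun x := by
  simp only [gfun, neg_neg]
  ring

lemma gfun_cont : Continuous gfun :=
  myBump.continuous.sub (myBump.continuous.comp continuous_neg)

lemma gfun_support (x : ℝ) (hx : gfun x ≠ 0) : x ∈ Set.Icc (-(1/2) : ℝ) (1/2) := by
  have : (myBump : ℝ → ℝ) x ≠ 0 ∨ (myBump : ℝ → ℝ) (-x) ≠ 0 := by
    by_contra h
    push_neg at h
    exact hx (by simp [gfun, h.1, h.2])
  rcases this with h | h
  · have := myBump_mem x h
    constructor <;> [linarith [this.1]; linarith [this.2]]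
  · have := myBump_mem (-x) h
    constructor <;> [linarith [this.2]; linarith [this.1]]

lemma gfun_hcs : HasCompactSupport gfun := by
  apply HasCompactSupport.intro isCompact_Icc (K := Set.Icc (-(1/2) : ℝ) (1/2))
  intro x hx
  by_contra h
  exact hx (gfun_support x h)

lemma gfun_mul_intble (c : ℝ → ℝ) (hc : Continuous c) :
    Integrable (fun y => gfun y * c y) :=
  (gfun_cont.mul hc).integrable_of_hasCompactSupport (gfun_hcs.mul_right)

lemma gfun_cos_zero (ξ : ℝ) : ∫ y : ℝ, gfun y * Real.cos (ξ * y) = 0 := by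
  have h1 := integral_neg_eq_self (fun y => gfun y * Real.cos (ξ * y)) volume
  simp only [gfun_odd, mul_neg, Real.cos_neg, neg_mul] at h1
  rw [integral_neg] at h1
  linarith

lemma bump_sin_intble (ξ : ℝ) :
    Integrable (fun y => (myBump : ℝ → ℝ) y * Real.sin (ξ * y)) :=
  (myBump.continuous.mul (by continuity)).integrable_of_hasCompactSupport
    myBump.hasCompactSupport.mul_right

lemma bump_neg_sin_intble (ξ : ℝ) :
    Integrable (fun y => (myBump : ℝ → ℝ) (-y) * Real.sin (ξ * y)) :=
  ((myBump.continuous.comp continuous_neg).mul (by continuity)).integrable_of_hasCompactSupport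
    ((myBump.hasCompactSupport.comp_homeomorph (Homeomorph.neg ℝ)).mul_right)

lemma bump_neg_sin (ξ : ℝ) : ∫ y : ℝ, (myBump : ℝ → ℝ) (-y) * Real.sin (ξ * y)
    = - ∫ y : ℝ, (myBump : ℝ → ℝ) y * Real.sin (ξ * y) := by
  have h1 := integral_neg_eq_self (fun y => (myBump : ℝ → ℝ) (-y) * Real.sin (ξ * y)) volume
  simp only [neg_neg, mul_neg, Real.sin_neg] at h1
  rw [← h1, integral_neg]

lemma Sfun_eq (ξ : ℝ) :
    Sfun ξ = 2 * ∫ y : ℝ, (myBump : ℝ → ℝ) y * Real.sin (ξ * y) := by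
  have : Sfun ξ = ∫ y : ℝ, ((myBump : ℝ → ℝ) y * Real.sin (ξ * y)
      - (myBump : ℝ → ℝ) (-y) * Real.sin (ξ * y)) := by
    unfold Sfun gfun
    congr 1
    funext y
    ring
  rw [this, integral_sub (bump_sin_intble ξ) (bump_neg_sin_intble ξ), bump_neg_sin]
  ring

lemma Sfun_pos {ξ : ℝ} (h0 : 0 < ξ) (h1 : ξ ≤ 1) : 0 < Sfun ξ := by
  rw [Sfun_eq]
  have hnn : ∀ y : ℝ, 0 ≤ (myBump : ℝ → ℝ) y * Real.sin (ξ * y) := by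
    intro y
    by_cases hy : (myBump : ℝ → ℝ) y = 0
    · simp [hy]
    · have hmem := myBump_mem y hy
      apply mul_nonneg myBump.nonneg
      apply le_of_lt
      apply Real.sin_pos_of_pos_of_lt_pi (mul_pos h0 hmem.1)
      nlinarith [Real.pi_gt_three, hmem.2]
  have hpos : 0 < ∫ y : ℝ, (myBump : ℝ → ℝ) y * Real.sin (ξ * y) := by
    rw [integral_pos_iff_support_of_nonneg hnn (bump_sin_intble ξ)]
    apply lt_of_lt_of_le (Metric.measure_ball_pos volume (1/4 : ℝ) (by norm_num : (0:ℝ) < 1/4))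
    apply measure_mono
    intro y hy
    rw [Real.ball_eq_Ioo] at hy
    have hmem : y ∈ Set.Ioo (0:ℝ) (1/2) := by
      constructor <;> [linarith [hy.1]; linarith [hy.2]]
    have hy' := myBump_ball y hmem
    have hsin : 0 < Real.sin (ξ * y) := by
      apply Real.sin_pos_of_pos_of_lt_pi (mul_pos h0 hmem.1)
      nlinarith [Real.pi_gt_three, hmem.2]
    simp only [Function.mem_support]
    have hb : 0 < (myBump : ℝ → ℝ) y := lt_of_le_of_ne myBump.nonneg (Ne.symm hy')
    positivity
  linarith

lemma Sfun_continuous : Continuous Sfun := by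
  apply continuous_of_dominated (bound := fun y => |gfun y|)
  · intro ξ
    exact (gfun_mul_intble _ (by continuity)).aestronglyMeasurable
  · intro ξ
    filter_upwards with y
    rw [Real.norm_eq_abs, abs_mul]
    calc |gfun y| * |Real.sin (ξ * y)| ≤ |gfun y| * 1 :=
          mul_le_mul_of_nonneg_left (Real.abs_sin_le_one _) (abs_nonneg _)
      _ = |gfun y| := mul_one _
  · exact (gfun_cont.integrable_of_hasCompactSupport gfun_hcs).abs
  · filter_upwards with y
    continuity

lemma fourierCos_hfun (ξ : ℝ) : fourierCos hfun ξ = -Real.sin (ξ / 2) * Sfun ξ := by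
  unfold fourierCos
  have key : (fun x => hfun x * Real.cos (ξ * x))
      = fun x => (fun y => gfun y * Real.cos (ξ * y + ξ / 2)) (x - 1/2) := by
    funext x
    simp only [hfun]
    congr 2
    ring
  rw [key, integral_sub_right_eq_self (fun y => gfun y * Real.cos (ξ * y + ξ / 2)) (1/2)]
  have expand : (fun y => gfun y * Real.cos (ξ * y + ξ / 2))
      = fun y => Real.cos (ξ / 2) * (gfun y * Real.cos (ξ * y))
          - Real.sin (ξ / 2) * (gfun y * Real.sin (ξ * y)) := by
    funext y
    rw [Real.cos_add]
    ring
  rw [expand, integral_sub ((gfun_mul_intble _ (by continuity)).const_mul _)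
      ((gfun_mul_intble _ (by continuity)).const_mul _),
    MeasureTheory.integral_const_mul, MeasureTheory.integral_const_mul, gfun_cos_zero]
  simp only [mul_zero, zero_sub, neg_mul]
  rfl

lemma fourierSin_hfun (ξ : ℝ) : fourierSin hfun ξ = Real.cos (ξ / 2) * Sfun ξ := by
  unfold fourierSin
  have key : (fun x => hfun x * Real.sin (ξ * x))
      = fun x => (fun y => gfun y * Real.sin (ξ * y + ξ / 2)) (x - 1/2) := by
    funext x
    simp only [hfun]
    congr 2
    ring
  rw [key, integral_sub_right_eq_self (fun y => gfun y * Real.sin (ξ * y + ξ / 2)) (1/2)]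
  have expand : (fun y => gfun y * Real.sin (ξ * y + ξ / 2))
      = fun y => Real.cos (ξ / 2) * (gfun y * Real.sin (ξ * y))
          + Real.sin (ξ / 2) * (gfun y * Real.cos (ξ * y)) := by
    funext y
    rw [Real.sin_add]
    ring
  rw [expand, integral_add ((gfun_mul_intble _ (by continuity)).const_mul _)
      ((gfun_mul_intble _ (by continuity)).const_mul _),
    MeasureTheory.integral_const_mul, MeasureTheory.integral_const_mul, gfun_cos_zero]
  simp only [mul_zero, add_zero]
  rfl

/-- For every `κ > 0` there is a smooth compactly supported function `h` with support in
`[0, ∞)` such that `∫_{-1}^{1} (A_h(ξ)² − B_h(ξ)²)/(ξ² + κ) dξ < 0`. -/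
theorem stmt0 (κ : ℝ) (hκ : 0 < κ) :
    ∃ h : ℝ → ℝ, ContDiff ℝ (⊤ : ℕ∞) h ∧ HasCompactSupport h ∧ tsupport h ⊆ Set.Ici 0 ∧
      ∫ ξ in (-1 : ℝ)..1, ((fourierCos h ξ) ^ 2 - (fourierSin h ξ) ^ 2) / (ξ ^ 2 + κ) < 0 := by
  refine ⟨hfun, ?_, ?_, ?_, ?_⟩
  · have hg : ContDiff ℝ (⊤ : ℕ∞) gfun :=
      myBump.contDiff.sub (myBump.contDiff.comp contDiff_neg)
    exact hg.comp (contDiff_id.sub contDiff_const)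
  · apply HasCompactSupport.intro (isCompact_Icc (a := (0:ℝ)) (b := 1))
    intro x hx
    by_contra h
    have h2 := gfun_support _ h
    exact hx ⟨by linarith [h2.1], by linarith [h2.2]⟩
  · have hsub : Function.support hfun ⊆ Set.Icc 0 1 := by
      intro x hx
      have h2 := gfun_support _ (Function.mem_support.mp hx)
      exact ⟨by linarith [h2.1], by linarith [h2.2]⟩
    calc tsupport hfun ⊆ closure (Set.Icc (0:ℝ) 1) := closure_mono hsub
      _ = Set.Icc (0:ℝ) 1 := isClosed_Icc.closure_eq
      _ ⊆ Set.Ici 0 := fun x hx => hx.1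
  · have key : ∀ ξ : ℝ, (fourierCos hfun ξ) ^ 2 - (fourierSin hfun ξ) ^ 2
        = -(Real.cos ξ * (Sfun ξ) ^ 2) := by
      intro ξ
      have hc : Real.cos ξ = Real.cos (ξ/2) ^ 2 - Real.sin (ξ/2) ^ 2 := by
        rw [← Real.cos_two_mul']
        congr 1
        ring
      rw [fourierCos_hfun, fourierSin_hfun, hc]
      ring
    have hrw : (fun ξ => ((fourierCos hfun ξ) ^ 2 - (fourierSin hfun ξ) ^ 2) / (ξ ^ 2 + κ))
        = fun ξ => -(Real.cos ξ * (Sfun ξ) ^ 2 / (ξ ^ 2 + κ)) := by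
      funext ξ
      rw [key]
      ring
    calc ∫ ξ in (-1 : ℝ)..1, ((fourierCos hfun ξ) ^ 2 - (fourierSin hfun ξ) ^ 2) / (ξ ^ 2 + κ)
        = ∫ ξ in (-1 : ℝ)..1, -(Real.cos ξ * (Sfun ξ) ^ 2 / (ξ ^ 2 + κ)) := by rw [hrw]
      _ = -∫ ξ in (-1 : ℝ)..1, Real.cos ξ * (Sfun ξ) ^ 2 / (ξ ^ 2 + κ) :=
          intervalIntegral.integral_neg
      _ < 0 := by
          rw [neg_lt_zero]
          set F : ℝ → ℝ := fun ξ => Real.cos ξ * (Sfun ξ) ^ 2 / (ξ ^ 2 + κ) with hF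
          have hFcont : Continuous F := by
            apply Continuous.div
            · exact Real.continuous_cos.mul (Sfun_continuous.pow 2)
            · continuity
            · intro ξ
              positivity
          have h1 : 0 < ∫ ξ in (0:ℝ)..1, F ξ := by
            apply intervalIntegral.intervalIntegral_pos_of_pos_on
              (hFcont.intervalIntegrable _ _)
            · intro ξ hξ
              have hcos : 0 < Real.cos ξ := by
                apply Real.cos_pos_of_mem_Ioo
                constructor
                · linarith [hξ.1, Real.pi_gt_three]
                · linarith [hξ.2, Real.pi_gt_three]
              have hS := Sfun_pos hξ.1 hξ.2.le
              have hden : (0:ℝ) < ξ ^ 2 + κ := by positivity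
              simp only [hF]
              positivity
            · norm_num
          have h2 : 0 ≤ ∫ ξ in (-1:ℝ)..0, F ξ := by
            apply intervalIntegral.integral_nonneg (by norm_num)
            intro ξ hξ
            have hcos : 0 ≤ Real.cos ξ := by
              apply Real.cos_nonneg_of_mem_Icc
              constructor
              · linarith [hξ.1, Real.pi_gt_three]
              · linarith [hξ.2, Real.pi_gt_three]
            have hden : (0:ℝ) < ξ ^ 2 + κ := by positivity
            simp only [hF]
            positivity
          have hadd := intervalIntegral.integral_add_adjacent_intervals
            (hFcont.intervalIntegrable (μ := volume) (-1) 0)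
            (hFcont.intervalIntegrable (μ := volume) 0 1)
          linarith [hadd]
end

section
/- Let (Ω, 𝒪, μ) be a probability space and T : Ω → Ω a measurable, measure-preserving map with T ∘ T = id. Let 𝒢 ⊆ 𝒜 ⊆ 𝒪 be sub-σ-algebras and assume: (i) for every square-integrable 𝒢-measurable g : Ω → ℝ one has g ∘ T = g μ-almost everywhere; (ii) (Markov property) for every square-integrable 𝒜-measurable F : Ω → ℝ, the conditional expectations satisfy E[F∘T | 𝒜] = E[F∘T | 𝒢] μ-almost everywhere. Then for every square-integrable 𝒜-measurable F : Ω → ℝ one has ∫_Ω (F∘T)·F dμ ≥ 0 (the integrand is integrable by the Cauchy–Schwarz inequality, since T preserves μ). -/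
open MeasureTheory

/-- Product of two `L²` real functions is integrable. -/
lemma memℒp_two_integrable_mul {Ω : Type*} {mΩ : MeasurableSpace Ω} {μ : Measure Ω}
    {f g : Ω → ℝ} (hf : MemLp f 2 μ) (hg : MemLp g 2 μ) :
    Integrable (fun ω => f ω * g ω) μ := by
  have h : MemLp (f • g) 1 μ := by
    exact MemLp.smul hg hf
  exact memLp_one_iff_integrable.mp h

/-- Conditional expectation of an `L²` function is `L²` (probability measure case). -/
lemma condexp_memℒp_two {Ω : Type*} {m0 : MeasurableSpace Ω} {μ : Measure Ω}
    [IsProbabilityMeasure μ] {m : MeasurableSpace Ω} (hm : m ≤ m0) {f : Ω → ℝ}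
    (hf : MemLp f 2 μ) : MemLp (μ[f|m]) 2 μ := by
  have hfi : Integrable f μ := hf.integrable one_le_two
  have h : (condExpL2 ℝ ℝ hm (hf.toLp f) : Ω → ℝ) =ᵐ[μ] μ[f|m] := by
    refine ae_eq_condExp_of_forall_setIntegral_eq hm hfi
      (fun s _ hμs => integrableOn_condExpL2_of_measure_ne_top hm hμs.ne _)
      (fun s hs hμs => ?_) (aestronglyMeasurable_condExpL2 hm _)
    rw [integral_condExpL2_eq hm (hf.toLp f) hs hμs.ne]
    exact integral_congr_ae (ae_restrict_of_ae hf.coeFn_toLp)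
  exact (Lp.memLp _).ae_eq h

/-- Abstract form of "Markov property + reflection invariance ⟹ reflection positivity":
if `T` is a measure-preserving involution, `𝒢 ≤ 𝒜` are sub-σ-algebras such that
`𝒢`-measurable `L²` functions are `T`-invariant a.e., and the Markov property
`E[F∘T | 𝒜] = E[F∘T | 𝒢]` a.e. holds for `𝒜`-measurable `L²` functions `F`, then
`∫ (F∘T)·F dμ ≥ 0` for every `𝒜`-measurable `F ∈ L²`. -/
theorem stmt4 {Ω : Type*} [m0 : MeasurableSpace Ω] (μ : Measure Ω) [IsProbabilityMeasure μ]
    (T : Ω → Ω) (hT : MeasurePreserving T μ μ) (hTT : T ∘ T = id)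
    (𝒢 𝒜 : MeasurableSpace Ω) (h𝒢𝒜 : 𝒢 ≤ 𝒜) (h𝒜 : 𝒜 ≤ m0)
    (hGinv : ∀ g : Ω → ℝ, MemLp g 2 μ → StronglyMeasurable[𝒢] g → g ∘ T =ᵐ[μ] g)
    (hMarkov : ∀ F : Ω → ℝ, MemLp F 2 μ → StronglyMeasurable[𝒜] F →
      μ[F ∘ T|𝒜] =ᵐ[μ] μ[F ∘ T|𝒢])
    (F : Ω → ℝ) (hF : MemLp F 2 μ) (hFmeas : StronglyMeasurable[𝒜] F) :
    0 ≤ ∫ ω, F (T ω) * F ω ∂μ := by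
  have h𝒢 : 𝒢 ≤ m0 := h𝒢𝒜.trans h𝒜
  set FT : Ω → ℝ := F ∘ T with hFTdef
  have hFT : MemLp FT 2 μ := hF.comp_measurePreserving hT
  have hFTi : Integrable FT μ := hFT.integrable one_le_two
  set g : Ω → ℝ := μ[FT|𝒢] with hgdef
  have hg2 : MemLp g 2 μ := condexp_memℒp_two h𝒢 hFT
  have hgmeas : StronglyMeasurable[𝒢] g := stronglyMeasurable_condExp
  have hginv : g ∘ T =ᵐ[μ] g := hGinv g hg2 hgmeas
  -- Step 1 : ∫ FT·F = ∫ F·g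
  have hmulFTF : Integrable (fun ω => F ω * FT ω) μ := memℒp_two_integrable_mul hF hFT
  have hstep1 : ∫ ω, F (T ω) * F ω ∂μ = ∫ ω, F ω * g ω ∂μ := by
    have h1 : μ[fun ω => F ω * FT ω|𝒜] =ᵐ[μ] fun ω => F ω * (μ[FT|𝒜]) ω := by
      have := condExp_mul_of_stronglyMeasurable_left hFmeas
        (by exact hmulFTF) hFTi
      filter_upwards [this] with ω hω using by exact hω
    have h2 : μ[fun ω => F ω * FT ω|𝒜] =ᵐ[μ] fun ω => F ω * g ω := by
      filter_upwards [h1, hMarkov F hF hFmeas] with ω hω hω' using by rw [hω, hω']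
    calc ∫ ω, F (T ω) * F ω ∂μ = ∫ ω, F ω * FT ω ∂μ := by
          simp only [hFTdef, Function.comp_apply, mul_comm]
      _ = ∫ ω, (μ[fun ω => F ω * FT ω|𝒜]) ω ∂μ :=
          (integral_condExp h𝒜 (f := fun ω => F ω * FT ω)).symm
      _ = ∫ ω, F ω * g ω ∂μ := integral_congr_ae h2
  -- Step 2 : ∫ F·g = ∫ FT·g
  have hstep2 : ∫ ω, F ω * g ω ∂μ = ∫ ω, FT ω * g ω ∂μ := by
    have hTmeas : @Measurable Ω Ω m0 m0 T := @MeasurePreserving.measurable Ω Ω m0 m0 T μ μ hT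
    have hinj : Function.Injective T :=
      Function.LeftInverse.injective (g := T) fun x => congrFun hTT x
    have hmap : ∀ s : Set Ω, MeasurableSet[m0] s → MeasurableSet[m0] (T '' s) := by
      intro s hs
      have himg : T '' s = T ⁻¹' s := by
        ext x
        constructor
        · rintro ⟨y, hy, rfl⟩
          have hy2 : T (T y) = y := congrFun hTT y
          rw [Set.mem_preimage, hy2]
          exact hy
        · intro hx
          exact ⟨T x, hx, congrFun hTT x⟩
      rw [himg]
      exact hTmeas hs
    have hemb : @MeasurableEmbedding Ω Ω m0 m0 T :=
      @MeasurableEmbedding.mk Ω Ω m0 m0 T hinj hTmeas (fun s hs => hmap s hs)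
    have hcomp : ∫ ω, F (T ω) * g (T ω) ∂μ = ∫ ω, F ω * g ω ∂μ :=
      hT.integral_comp hemb (fun ω => F ω * g ω)
    rw [← hcomp]
    refine integral_congr_ae ?_
    filter_upwards [hginv] with ω hω
    simp only [hFTdef, Function.comp_apply]
    rw [show g (T ω) = (g ∘ T) ω from rfl, hω]
  -- Step 3 : ∫ FT·g = ∫ g·g
  have hmulFTg : Integrable (fun ω => FT ω * g ω) μ := memℒp_two_integrable_mul hFT hg2
  have hstep3 : ∫ ω, FT ω * g ω ∂μ = ∫ ω, g ω * g ω ∂μ := by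
    have h1 : μ[fun ω => g ω * FT ω|𝒢] =ᵐ[μ] fun ω => g ω * g ω := by
      have := condExp_mul_of_stronglyMeasurable_left hgmeas
        (by rw [mul_comm]; exact hmulFTg) hFTi
      filter_upwards [this] with ω hω using by exact hω
    calc ∫ ω, FT ω * g ω ∂μ = ∫ ω, g ω * FT ω ∂μ := by simp [mul_comm]
      _ = ∫ ω, (μ[fun ω => g ω * FT ω|𝒢]) ω ∂μ :=
          (integral_condExp h𝒢 (f := fun ω => g ω * FT ω)).symm
      _ = ∫ ω, g ω * g ω ∂μ := integral_congr_ae h1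
  rw [hstep1, hstep2, hstep3]
  exact integral_nonneg fun ω => mul_self_nonneg _
end

section
/- Let λ₀ > 0, α ∈ [0, 1), and let μ : ℕ → ℝ be a square-summable sequence (∑ (μ n)² < ∞) with |μ n| ≤ α·λ₀ for every n. Then (1/N)·log( λ₀^N + ∑'_{n} (μ n)^N ) → log λ₀ as N → ∞. (For N ≥ 2 the series ∑_n (μ n)^N converges absolutely, and λ₀^N + ∑_n (μ n)^N > 0 for all sufficiently large N.) -/
open Filter

/-- Spectral form of `lim (1/N) log tr(U^N) = log λ₀`: if `λ₀ > 0`, `0 ≤ α < 1`, and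
`μ : ℕ → ℝ` is square-summable with `|μ n| ≤ α λ₀`, then
`(1/N) log(λ₀^N + ∑' n, (μ n)^N) → log λ₀` as `N → ∞`. -/
theorem stmt6 (lam₀ : ℝ) (hlam₀ : 0 < lam₀) (α : ℝ) (hα0 : 0 ≤ α) (hα1 : α < 1)
    (μ : ℕ → ℝ) (hsq : Summable fun n => (μ n) ^ 2)
    (hle : ∀ n, |μ n| ≤ α * lam₀) :
    Tendsto (fun N : ℕ => (N : ℝ)⁻¹ * Real.log (lam₀ ^ N + ∑' n, (μ n) ^ N))
      atTop (nhds (Real.log lam₀)) := by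
  set C := ∑' n, (μ n) ^ 2 with hC
  have hC0 : 0 ≤ C := tsum_nonneg fun n => sq_nonneg _
  have hαl : 0 ≤ α * lam₀ := mul_nonneg hα0 hlam₀.le
  -- pointwise bound for N ≥ 2
  have hpt : ∀ N, 2 ≤ N → ∀ n, |(μ n) ^ N| ≤ (α * lam₀) ^ (N - 2) * (μ n) ^ 2 := by
    intro N hN n
    have h1 : |(μ n) ^ N| = |μ n| ^ (N - 2) * |μ n| ^ 2 := by
      rw [abs_pow, ← pow_add]
      congr 1
      omega
    rw [h1, sq_abs]
    exact mul_le_mul_of_nonneg_right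
      (pow_le_pow_left₀ (abs_nonneg _) (hle n) _) (sq_nonneg _)
  have hsumm : ∀ N, 2 ≤ N → Summable fun n => (μ n) ^ N := by
    intro N hN
    refine Summable.of_abs (Summable.of_nonneg_of_le (fun n => abs_nonneg _)
      (hpt N hN) (hsq.mul_left _))
  have htsum : ∀ N, 2 ≤ N → |∑' n, (μ n) ^ N| ≤ (α * lam₀) ^ (N - 2) * C := by
    intro N hN
    calc |∑' n, (μ n) ^ N| ≤ ∑' n, |(μ n) ^ N| := by
          simpa using norm_tsum_le_tsum_norm (f := fun n => (μ n) ^ N)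
            (by simpa using (hsumm N hN).abs)
      _ ≤ ∑' n, (α * lam₀) ^ (N - 2) * (μ n) ^ 2 := by
          refine Summable.tsum_le_tsum (hpt N hN) (hsumm N hN).abs (hsq.mul_left _)
      _ = (α * lam₀) ^ (N - 2) * C := by rw [tsum_mul_left]
  -- the ratio
  set r : ℕ → ℝ := fun N => (∑' n, (μ n) ^ N) / lam₀ ^ N with hrdef
  have hlpow : ∀ N : ℕ, (0:ℝ) < lam₀ ^ N := fun N => pow_pos hlam₀ N
  have hrbound : ∀ N, 2 ≤ N → |r N| ≤ (C / lam₀ ^ 2) * α ^ (N - 2) := by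
    intro N hN
    rw [hrdef]
    simp only
    rw [abs_div, abs_of_pos (hlpow N), div_le_iff₀ (hlpow N)]
    calc |∑' n, (μ n) ^ N| ≤ (α * lam₀) ^ (N - 2) * C := htsum N hN
      _ = C / lam₀ ^ 2 * α ^ (N - 2) * lam₀ ^ N := by
          rw [mul_pow]
          have : lam₀ ^ N = lam₀ ^ (N - 2) * lam₀ ^ 2 := by
            rw [← pow_add]; congr 1; omega
          rw [this]
          field_simp
  have hαtend : Tendsto (fun N : ℕ => (C / lam₀ ^ 2) * α ^ (N - 2)) atTop (nhds 0) := by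
    have h1 : Tendsto (fun N : ℕ => α ^ (N - 2)) atTop (nhds 0) :=
      (tendsto_pow_atTop_nhds_zero_of_lt_one hα0 hα1).comp
        (tendsto_sub_atTop_nat 2)
    simpa using h1.const_mul (C / lam₀ ^ 2)
  have hr0 : Tendsto r atTop (nhds 0) := by
    refine squeeze_zero_norm' ?_ hαtend
    filter_upwards [eventually_ge_atTop 2] with N hN
    simpa using hrbound N hN
  -- eventually 1 + r N > 0
  have hpos : ∀ᶠ N in atTop, 0 < 1 + r N := by
    have := hr0.eventually (eventually_abs_sub_lt 0 one_pos)
    filter_upwards [this] with N hN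
    rw [sub_zero] at hN
    have := (abs_lt.mp hN).1
    linarith
  -- the limit of the auxiliary expression
  have haux : Tendsto (fun N : ℕ => Real.log lam₀ + (N : ℝ)⁻¹ * Real.log (1 + r N))
      atTop (nhds (Real.log lam₀)) := by
    have h1 : Tendsto (fun N : ℕ => (N : ℝ)⁻¹) atTop (nhds 0) :=
      tendsto_inv_atTop_zero.comp tendsto_natCast_atTop_atTop
    have h2 : Tendsto (fun N : ℕ => Real.log (1 + r N)) atTop (nhds 0) := by
      have hc : ContinuousAt Real.log 1 := Real.continuousAt_log (by norm_num)
      have : Tendsto (fun N : ℕ => 1 + r N) atTop (nhds 1) := by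
        simpa using (tendsto_const_nhds (x := (1:ℝ))).add hr0
      simpa [Function.comp_def] using hc.tendsto.comp this
    have := (h1.mul h2).const_add (Real.log lam₀)
    simpa using this
  refine haux.congr' ?_
  filter_upwards [hpos, eventually_ge_atTop 1] with N hN hN1
  have hNne : (N : ℝ) ≠ 0 := Nat.cast_ne_zero.mpr (by omega)
  have hSN : (∑' n, (μ n) ^ N) = lam₀ ^ N * r N := by
    rw [hrdef]; field_simp
  rw [hSN, ← mul_one_add, Real.log_mul (ne_of_gt (hlpow N)) (ne_of_gt hN),
    Real.log_pow, mul_add]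
  congr 1
  field_simp
end

section
/- Let (Ω, 𝒪, ℙ) be a probability space and X : Ω → [0, ∞) a measurable function. Let n ≥ 1 be an integer and b > 0, C > 0, ε₁ ∈ (0, 1) constants, and suppose that for every ε ∈ (0, ε₁], ℙ( X ≥ exp( b·(log(1/ε))^n + 1 ) ) ≤ exp( −C·ε^{−1/(2n)} ). Then X is integrable: 𝔼[X] < ∞. -/
open MeasureTheory

/-- Tail-estimate-to-integrability step of Nelson's theorem: if a nonnegative measurable
`X` satisfies `ℙ(X ≥ exp(b (log(1/ε))ⁿ + 1)) ≤ exp(−C ε^{−1/(2n)})` for all `ε ∈ (0, ε₁]`,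
then `X` is integrable. -/
theorem stmt8 {Ω : Type*} [MeasurableSpace Ω] (μ : Measure Ω) [IsProbabilityMeasure μ]
    (X : Ω → ℝ) (hXmeas : Measurable X) (hXnonneg : ∀ ω, 0 ≤ X ω)
    (n : ℕ) (hn : 1 ≤ n) (b C ε₁ : ℝ) (hb : 0 < b) (hC : 0 < C)
    (hε₁ : ε₁ ∈ Set.Ioo (0 : ℝ) 1)
    (htail : ∀ ε : ℝ, ε ∈ Set.Ioc (0 : ℝ) ε₁ →
      μ {ω | Real.exp (b * (Real.log (1 / ε)) ^ n + 1) ≤ X ω}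
        ≤ ENNReal.ofReal (Real.exp (-C * ε ^ (-(1 / (2 * (n : ℝ))))))) :
    Integrable X μ := by
  have hn0 : (0:ℝ) < (n:ℝ) := by exact_mod_cast hn
  have hnne : (n:ℝ) ≠ 0 := hn0.ne'
  -- Step 1: eventually in u, 2*(b*u^n+1) ≤ C * exp(u/(2n))
  have hlo := isLittleO_pow_exp_pos_mul_atTop n
      (show (0:ℝ) < 1/(2*(n:ℝ)) by positivity)
  have h1a : ∀ᶠ u : ℝ in Filter.atTop,
      2*b*u^n ≤ (C/2) * Real.exp ((1/(2*(n:ℝ))) * u) := by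
    have := hlo.bound (show (0:ℝ) < C/(4*b) by positivity)
    filter_upwards [this, Filter.eventually_ge_atTop (0:ℝ)] with u hu hu0
    have h2 : |u ^ n| = u ^ n := abs_of_nonneg (by positivity)
    rw [Real.norm_eq_abs, Real.norm_eq_abs, h2,
      abs_of_pos (Real.exp_pos _)] at hu
    calc 2*b*u^n ≤ 2*b*((C/(4*b)) * Real.exp ((1/(2*(n:ℝ))) * u)) := by
          have hb2 : (0:ℝ) ≤ 2*b := by positivity
          nlinarith [hu, hb2]
      _ = (C/2) * Real.exp ((1/(2*(n:ℝ))) * u) := by field_simp; ring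
  have h1b : ∀ᶠ u : ℝ in Filter.atTop,
      (2:ℝ) ≤ (C/2) * Real.exp ((1/(2*(n:ℝ))) * u) := by
    have hexp : Filter.Tendsto (fun u : ℝ => (C/2) * Real.exp ((1/(2*(n:ℝ))) * u))
        Filter.atTop Filter.atTop := by
      apply Filter.Tendsto.const_mul_atTop (by positivity)
      exact (Real.tendsto_exp_atTop).comp
        (Filter.Tendsto.const_mul_atTop (by positivity) Filter.tendsto_id)
    exact hexp.eventually_ge_atTop 2
  have h1 : ∀ᶠ u : ℝ in Filter.atTop,
      2*(b*u^n + 1) ≤ C * Real.exp (u / (2*(n:ℝ))) := by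
    filter_upwards [h1a, h1b] with u ha hb'
    have heq : (1/(2*(n:ℝ))) * u = u / (2*(n:ℝ)) := by ring
    rw [heq] at ha hb'
    nlinarith [ha, hb']
  -- Step 2: u(t) := ((log t - 1)/b)^(1/n) tends to atTop
  have h2 : Filter.Tendsto (fun t : ℝ => ((Real.log t - 1)/b) ^ ((1:ℝ)/(n:ℝ)))
      Filter.atTop Filter.atTop := by
    apply (tendsto_rpow_atTop (by positivity : (0:ℝ) < 1/(n:ℝ))).comp
    apply Filter.Tendsto.atTop_div_const hb
    exact Filter.tendsto_atTop_add_const_right _ _ Real.tendsto_log_atTop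
  have hLnn : 0 ≤ Real.log (1/ε₁) := by
    apply Real.log_nonneg
    rw [le_div_iff₀ hε₁.1]
    linarith [hε₁.2]
  -- Step 3: eventually in t, μ {t ≤ X} ≤ ofReal (t ^ (-2 : ℝ))
  have key : ∀ᶠ t : ℝ in Filter.atTop,
      μ {ω | t ≤ X ω} ≤ ENNReal.ofReal (t ^ (-2 : ℝ)) := by
    filter_upwards [h2.eventually h1, Filter.eventually_ge_atTop (1:ℝ),
      Real.tendsto_log_atTop.eventually_ge_atTop
        (1 + b * (Real.log (1/ε₁))^n)] with t hgrow ht1 htlog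
    have ht0 : (0:ℝ) < t := lt_of_lt_of_le one_pos ht1
    set u : ℝ := ((Real.log t - 1)/b) ^ ((1:ℝ)/(n:ℝ)) with hu_def
    have hbase : 0 ≤ (Real.log t - 1)/b := by
      apply div_nonneg _ hb.le
      nlinarith [pow_nonneg hLnn n, htlog]
    have hu0 : 0 ≤ u := Real.rpow_nonneg hbase _
    have hun : u ^ n = (Real.log t - 1)/b := by
      rw [hu_def, ← Real.rpow_natCast (((Real.log t - 1)/b) ^ ((1:ℝ)/(n:ℝ))) n,
        ← Real.rpow_mul hbase, one_div_mul_cancel hnne, Real.rpow_one]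
    set ε : ℝ := Real.exp (-u) with hε_def
    have hε0 : 0 < ε := Real.exp_pos _
    have hL : Real.log (1/ε₁) ≤ u := by
      have hrw : Real.log (1/ε₁)
          = ((Real.log (1/ε₁))^n) ^ ((1:ℝ)/(n:ℝ)) := by
        rw [← Real.rpow_natCast (Real.log (1/ε₁)) n, ← Real.rpow_mul hLnn,
          mul_one_div_cancel hnne, Real.rpow_one]
      rw [hrw, hu_def]
      apply Real.rpow_le_rpow (pow_nonneg hLnn n) _ (by positivity)
      rw [le_div_iff₀ hb]
      nlinarith [htlog]
    have hεε₁ : ε ≤ ε₁ := by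
      have : ε ≤ Real.exp (-(Real.log (1/ε₁))) :=
        Real.exp_le_exp.mpr (by linarith)
      calc ε ≤ Real.exp (-(Real.log (1/ε₁))) := this
        _ = ε₁ := by
            rw [Real.log_div one_ne_zero hε₁.1.ne', Real.log_one]
            simp [Real.exp_log hε₁.1]
    have hlogε : Real.log (1/ε) = u := by
      rw [hε_def, one_div, ← Real.exp_neg, neg_neg, Real.log_exp]
    have hthresh : b * (Real.log (1/ε))^n + 1 = Real.log t := by
      rw [hlogε, hun]
      field_simp; ring
    have htail' := htail ε ⟨hε0, hεε₁⟩
    rw [hthresh, Real.exp_log ht0] at htail'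
    have hεpow : ε ^ (-(1 / (2 * (n : ℝ)))) = Real.exp (u / (2*(n:ℝ))) := by
      rw [Real.rpow_def_of_pos hε0, hε_def, Real.log_exp]
      ring_nf
    rw [hεpow] at htail'
    refine htail'.trans (ENNReal.ofReal_le_ofReal ?_)
    rw [Real.rpow_def_of_pos ht0]
    apply Real.exp_le_exp.mpr
    have hlogt : Real.log t = b * u^n + 1 := by
      rw [hun]; field_simp; ring
    nlinarith [hgrow, hlogt]
  -- Step 4: conclude integrability via the layer-cake formula
  refine ⟨hXmeas.aestronglyMeasurable, ?_⟩
  rw [hasFiniteIntegral_iff_ofReal (Filter.Eventually.of_forall hXnonneg)]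
  rw [lintegral_eq_lintegral_meas_le μ (Filter.Eventually.of_forall hXnonneg)
    hXmeas.aemeasurable]
  obtain ⟨T₀, hT₀⟩ := Filter.eventually_atTop.mp key
  set T : ℝ := max T₀ 1 with hT_def
  have hT1 : (1:ℝ) ≤ T := le_max_right _ _
  have hT0 : (0:ℝ) < T := lt_of_lt_of_le one_pos hT1
  have hsplit : Set.Ioi (0:ℝ) = Set.Ioc 0 T ∪ Set.Ioi T :=
    (Set.Ioc_union_Ioi_eq_Ioi hT0.le).symm
  rw [hsplit, lintegral_union measurableSet_Ioi (Set.Ioc_disjoint_Ioi le_rfl)]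
  apply ENNReal.add_lt_top.mpr
  constructor
  · calc ∫⁻ t in Set.Ioc (0:ℝ) T, μ {ω | t ≤ X ω}
        ≤ ∫⁻ _ in Set.Ioc (0:ℝ) T, 1 := lintegral_mono fun t => prob_le_one
      _ = volume (Set.Ioc (0:ℝ) T) := setLIntegral_one _
      _ < ⊤ := by
          rw [Real.volume_Ioc]
          exact ENNReal.ofReal_lt_top
  · calc ∫⁻ t in Set.Ioi T, μ {ω | t ≤ X ω}
        ≤ ∫⁻ t in Set.Ioi T, ENNReal.ofReal (t ^ (-2:ℝ)) := by
          apply setLIntegral_mono' measurableSet_Ioi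
          intro t ht
          exact hT₀ t (le_trans (le_max_left _ _) (le_of_lt ht))
      _ ≤ ∫⁻ t in Set.Ioi T, (‖t ^ (-2:ℝ)‖₊ : ENNReal) := by
          apply lintegral_mono
          intro t
          show ENNReal.ofReal (t ^ (-2:ℝ)) ≤ (‖t ^ (-2:ℝ)‖₊ : ENNReal)
          rw [← enorm_eq_nnnorm, Real.enorm_eq_ofReal_abs]
          exact ENNReal.ofReal_le_ofReal (le_abs_self _)
      _ < ⊤ := (integrableOn_Ioi_rpow_of_lt (by norm_num) hT0).2
end

section
/- For every κ₀ > 0 there exists a function h : ℝ → ℝ which is infinitely differentiable, has compact support contained in [0, ∞), and satisfies, for every λ ∈ [0, 1], ∫_{-1}^{1} (A_h(ξ)² − B_h(ξ)²) / (ξ² + λ + κ₀) dξ < 0. -/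
open MeasureTheory

noncomputable def auxBump : ContDiffBump (0:ℝ) := ⟨1/16, 1/8, by norm_num, by norm_num⟩
noncomputable def auxg : ℝ → ℝ := fun y => y * auxBump y
noncomputable def auxS (ξ : ℝ) : ℝ := ∫ y : ℝ, auxg y * Real.sin (ξ * y)

lemma auxg_cont : Continuous auxg := continuous_id.mul auxBump.continuous

lemma auxg_supp : HasCompactSupport auxg := by
  have := auxBump.hasCompactSupport (E := ℝ)
  exact HasCompactSupport.mul_left (f := fun y : ℝ => y) this

lemma auxg_int : Integrable auxg := auxg_cont.integrable_of_hasCompactSupport auxg_supp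

lemma auxg_odd (y : ℝ) : auxg (-y) = - auxg y := by
  simp [auxg, auxBump.neg, neg_mul]

lemma auxg_trig_int (ξ : ℝ) (T : ℝ → ℝ) (hT : Continuous T) :
    Integrable (fun y : ℝ => auxg y * T (ξ * y)) := by
  refine (auxg_cont.mul (hT.comp (continuous_const.mul continuous_id))).integrable_of_hasCompactSupport ?_
  exact HasCompactSupport.mul_right auxg_supp

lemma auxg_cos_zero (ξ : ℝ) : ∫ y : ℝ, auxg y * Real.cos (ξ * y) = 0 := by
  have h1 : ∫ y : ℝ, auxg (-y) * Real.cos (ξ * (-y)) = ∫ y : ℝ, auxg y * Real.cos (ξ * y) :=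
    integral_neg_eq_self (fun y => auxg y * Real.cos (ξ * y)) _
  simp only [auxg_odd, mul_neg, Real.cos_neg, neg_mul] at h1
  rw [integral_neg] at h1
  linarith

noncomputable def auxh : ℝ → ℝ := fun x => auxg (x - 4⁻¹)

lemma auxh_cos (ξ : ℝ) : fourierCos auxh ξ = - Real.sin (ξ * 4⁻¹) * auxS ξ := by
  have key : (∫ x : ℝ, auxg (x - 4⁻¹) * Real.cos (ξ * x))
      = ∫ y : ℝ, auxg y * Real.cos (ξ * (y + 4⁻¹)) := by
    rw [← integral_sub_right_eq_self (fun y => auxg y * Real.cos (ξ * (y + 4⁻¹))) 4⁻¹]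
    congr 1; ext x; rw [sub_add_cancel]
  have expand : ∀ y : ℝ, auxg y * Real.cos (ξ * (y + 4⁻¹))
      = Real.cos (ξ * 4⁻¹) * (auxg y * Real.cos (ξ * y))
        - Real.sin (ξ * 4⁻¹) * (auxg y * Real.sin (ξ * y)) := by
    intro y
    rw [mul_add, Real.cos_add]; ring
  unfold fourierCos auxh
  rw [key]
  simp_rw [expand]
  rw [integral_sub (((auxg_trig_int ξ Real.cos Real.continuous_cos)).const_mul _)
    (((auxg_trig_int ξ Real.sin Real.continuous_sin)).const_mul _),
    integral_const_mul, integral_const_mul, auxg_cos_zero, mul_zero, zero_sub, neg_mul]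
  rfl

lemma auxh_sin (ξ : ℝ) : fourierSin auxh ξ = Real.cos (ξ * 4⁻¹) * auxS ξ := by
  have key : (∫ x : ℝ, auxg (x - 4⁻¹) * Real.sin (ξ * x))
      = ∫ y : ℝ, auxg y * Real.sin (ξ * (y + 4⁻¹)) := by
    rw [← integral_sub_right_eq_self (fun y => auxg y * Real.sin (ξ * (y + 4⁻¹))) 4⁻¹]
    congr 1; ext x; rw [sub_add_cancel]
  have expand : ∀ y : ℝ, auxg y * Real.sin (ξ * (y + 4⁻¹))
      = Real.cos (ξ * 4⁻¹) * (auxg y * Real.sin (ξ * y))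
        + Real.sin (ξ * 4⁻¹) * (auxg y * Real.cos (ξ * y)) := by
    intro y
    rw [mul_add, Real.sin_add]; ring
  unfold fourierSin auxh
  rw [key]
  simp_rw [expand]
  rw [integral_add (((auxg_trig_int ξ Real.sin Real.continuous_sin)).const_mul _)
    (((auxg_trig_int ξ Real.cos Real.continuous_cos)).const_mul _),
    integral_const_mul, integral_const_mul, auxg_cos_zero, mul_zero, add_zero]
  rfl

lemma auxS_cont : Continuous auxS := by
  refine continuous_of_dominated (bound := fun y => |auxg y|) ?_ ?_ auxg_int.abs ?_
  · intro ξ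
    exact (auxg_cont.mul (Real.continuous_sin.comp
      (continuous_const.mul continuous_id))).aestronglyMeasurable
  · intro ξ
    filter_upwards with y
    rw [Real.norm_eq_abs, abs_mul]
    exact mul_le_of_le_one_right (abs_nonneg _) (Real.abs_sin_le_one _)
  · filter_upwards with y
    exact continuous_const.mul (Real.continuous_sin.comp (continuous_id.mul continuous_const))

lemma auxS_even_sq (ξ : ℝ) : auxS (-ξ) = - auxS ξ := by
  unfold auxS
  simp_rw [neg_mul, Real.sin_neg, mul_neg]
  exact integral_neg _

lemma auxS_pos {ξ : ℝ} (h0 : 0 < ξ) (h1 : ξ ≤ 1) : 0 < auxS ξ := by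
  have hnn : ∀ y : ℝ, 0 ≤ auxg y * Real.sin (ξ * y) := by
    intro y
    rcases le_or_gt (1/8 : ℝ) (|y|) with hy | hy
    · have : auxBump y = 0 := by
        apply auxBump.zero_of_le_dist
        simpa [Real.dist_eq, auxBump] using hy
      simp [auxg, this]
    · have hynorm : |y| < 1/8 := hy
      have hφ : 0 ≤ auxBump y := auxBump.nonneg
      have hys : 0 ≤ y * Real.sin (ξ * y) := by
        rcases le_or_gt 0 y with hy0 | hy0
        · refine mul_nonneg hy0 (Real.sin_nonneg_of_nonneg_of_le_pi (by positivity) ?_)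
          have : ξ * y ≤ y := by nlinarith
          have : ξ * y ≤ 1/8 := by
            have := abs_le.1 hynorm.le
            nlinarith
          linarith [Real.pi_gt_three]
        · have hsin : Real.sin (ξ * y) ≤ 0 := by
            have : Real.sin (ξ * (-y)) ≥ 0 := by
              refine Real.sin_nonneg_of_nonneg_of_le_pi (by nlinarith) ?_
              have := abs_le.1 hynorm.le
              nlinarith [Real.pi_gt_three]
            have := Real.sin_neg (ξ * y)
            simp only [mul_neg] at *
            linarith
          nlinarith
      have h2 := mul_nonneg hys hφ
      unfold auxg; nlinarith
  have hint := auxg_trig_int ξ Real.sin Real.continuous_sin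
  rw [show auxS ξ = ∫ y : ℝ, auxg y * Real.sin (ξ * y) from rfl]
  rw [integral_pos_iff_support_of_nonneg hnn hint]
  have hsub : Set.Ioc (0:ℝ) (1/16) ⊆ Function.support fun y => auxg y * Real.sin (ξ * y) := by
    intro y hy
    have hy0 : 0 < y := hy.1
    have hy16 : y ≤ 1/16 := hy.2
    have hφ1 : auxBump y = 1 := by
      apply auxBump.one_of_mem_closedBall
      simp only [Metric.mem_closedBall, Real.dist_eq, sub_zero]
      rw [abs_of_pos hy0]
      simpa [auxBump] using hy16
    have hsin : 0 < Real.sin (ξ * y) := by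
      apply Real.sin_pos_of_pos_of_lt_pi (by positivity)
      nlinarith [Real.pi_gt_three]
    have : 0 < auxg y * Real.sin (ξ * y) := by
      unfold auxg; rw [hφ1]; nlinarith
    exact Function.mem_support.2 this.ne'
  calc (0:ENNReal) < volume (Set.Ioc (0:ℝ) (1/16)) := by
        rw [Real.volume_Ioc]; norm_num
    _ ≤ volume (Function.support fun y => auxg y * Real.sin (ξ * y)) := measure_mono hsub

/-- For every `κ₀ > 0` there is a smooth compactly supported function `h` with support in
`[0, ∞)` such that for every `λ ∈ [0,1]`,
`∫_{-1}^{1} (A_h(ξ)² − B_h(ξ)²)/(ξ² + λ + κ₀) dξ < 0`. -/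
theorem stmt14 (κ₀ : ℝ) (hκ₀ : 0 < κ₀) :
    ∃ h : ℝ → ℝ, ContDiff ℝ (⊤ : ℕ∞) h ∧ HasCompactSupport h ∧ tsupport h ⊆ Set.Ici 0 ∧
      ∀ lam : ℝ, lam ∈ Set.Icc (0 : ℝ) 1 →
        ∫ ξ in (-1 : ℝ)..1,
          ((fourierCos h ξ) ^ 2 - (fourierSin h ξ) ^ 2) / (ξ ^ 2 + lam + κ₀) < 0 := by
  refine ⟨auxh, ?_, ?_, ?_, ?_⟩
  · have hg : ContDiff ℝ (⊤ : ℕ∞) auxg := contDiff_id.mul auxBump.contDiff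
    exact hg.comp (contDiff_id.sub contDiff_const)
  · refine HasCompactSupport.intro (isCompact_Icc (a := (0:ℝ)) (b := 1)) ?_
    intro x hx
    have : auxBump (x - 4⁻¹) = 0 := by
      apply auxBump.zero_of_le_dist
      simp only [Set.mem_Icc, not_and_or, not_le] at hx
      simp only [Real.dist_eq, sub_zero, auxBump]
      rcases hx with hx | hx
      · rw [abs_of_nonpos (by linarith)]; linarith
      · rw [abs_of_nonneg (by linarith)]; linarith
    simp [auxh, auxg, this]
  · have hsub : Function.support auxh ⊆ Set.Icc (1/8 : ℝ) (3/8) := by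
      intro x hx
      by_contra hxI
      apply hx
      have : auxBump (x - 4⁻¹) = 0 := by
        apply auxBump.zero_of_le_dist
        simp only [Set.mem_Icc, not_and_or, not_le] at hxI
        simp only [Real.dist_eq, sub_zero, auxBump]
        rcases hxI with hx' | hx'
        · rw [abs_of_nonpos (by linarith)]; linarith
        · rw [abs_of_nonneg (by linarith)]; linarith
      simp [auxh, auxg, this]
    refine (closure_minimal hsub isClosed_Icc).trans ?_
    intro x hx
    have := hx.1
    simp only [Set.mem_Ici]
    linarith
  · intro lam hlam
    have hD : ∀ ξ : ℝ, 0 < ξ ^ 2 + lam + κ₀ := fun ξ => by nlinarith [sq_nonneg ξ, hlam.1]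
    set G : ℝ → ℝ := fun ξ =>
      (Real.cos (ξ * 4⁻¹) ^ 2 - Real.sin (ξ * 4⁻¹) ^ 2) * auxS ξ ^ 2 / (ξ ^ 2 + lam + κ₀)
      with hG
    have hcongr : (∫ ξ in (-1:ℝ)..1,
        ((fourierCos auxh ξ) ^ 2 - (fourierSin auxh ξ) ^ 2) / (ξ ^ 2 + lam + κ₀))
        = ∫ ξ in (-1:ℝ)..1, -G ξ := by
      apply intervalIntegral.integral_congr
      intro ξ _
      show (fourierCos auxh ξ ^ 2 - fourierSin auxh ξ ^ 2) / (ξ ^ 2 + lam + κ₀) = -G ξ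
      rw [auxh_cos, auxh_sin, hG]
      simp only
      rw [← neg_div]
      ring_nf
    rw [hcongr, intervalIntegral.integral_neg, neg_lt_zero]
    have hGcont : Continuous G := by
      apply Continuous.div
      · exact (((Real.continuous_cos.comp (continuous_id.mul continuous_const)).pow 2).sub
          ((Real.continuous_sin.comp (continuous_id.mul continuous_const)).pow 2)).mul
          (auxS_cont.pow 2)
      · fun_prop
      · intro ξ; exact (hD ξ).ne'
    have hGint : ∀ a b : ℝ, IntervalIntegrable G volume a b :=
      fun a b => hGcont.intervalIntegrable a b
    have hGeven : ∀ ξ : ℝ, G (-ξ) = G ξ := by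
      intro ξ
      rw [hG]
      simp only [neg_mul, Real.cos_neg, Real.sin_neg, auxS_even_sq, neg_sq, even_two,
        Even.neg_pow]
    have hsplit : (∫ ξ in (-1:ℝ)..1, G ξ)
        = (∫ ξ in (-1:ℝ)..0, G ξ) + ∫ ξ in (0:ℝ)..1, G ξ :=
      (intervalIntegral.integral_add_adjacent_intervals (hGint _ _) (hGint _ _)).symm
    have hneg : (∫ ξ in (0:ℝ)..1, G ξ) = ∫ ξ in (-1:ℝ)..0, G ξ := by
      have h := intervalIntegral.integral_comp_neg (a := (0:ℝ)) (b := 1) (f := G)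
      simp only [hGeven, neg_zero] at h
      simpa using h
    have hpos : 0 < ∫ ξ in (0:ℝ)..1, G ξ := by
      apply intervalIntegral.intervalIntegral_pos_of_pos_on (hGint 0 1) ?_ one_pos
      intro ξ hξ
      have hS := auxS_pos hξ.1 hξ.2.le
      have hC : 0 < Real.cos (ξ * 4⁻¹) ^ 2 - Real.sin (ξ * 4⁻¹) ^ 2 := by
        have h1 : Real.sin (ξ * 4⁻¹) ^ 2 ≤ (ξ * 4⁻¹) ^ 2 := Real.sin_sq_le_sq
        have h2 := Real.sin_sq_add_cos_sq (ξ * 4⁻¹)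
        nlinarith [hξ.1, hξ.2]
      rw [hG]
      exact div_pos (mul_pos hC (pow_pos hS 2)) (hD ξ)
    linarith
end

section
/- For all real numbers s and t with 0 ≤ s ≤ π/2 and 0 ≤ t ≤ π/2, the series ∑_{n=0}^{∞} sin((2n+1)t) · sin((2n+1)s) / (2n+1)² converges and equals (π/4)·min(s, t). -/
open Real

lemma aux_cos_sum (x : ℝ) (hx : x ∈ Set.Icc (0:ℝ) 1) :
    HasSum (fun n : ℕ => Real.cos (2*π*n*x) / (n:ℝ)^2) (π^2 * (x^2 - x + 1/6)) := by
  have h := hasSum_one_div_nat_pow_mul_cos (k:=1) one_ne_zero hx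
  have hb : (Polynomial.map (algebraMap ℚ ℝ) (Polynomial.bernoulli 2)).eval x
      = x^2 - x + 1/6 := by
    simp [Polynomial.bernoulli, Finset.sum_range_succ, Polynomial.eval_monomial, bernoulli]
    ring
  rw [hb] at h
  convert h using 2 with n
  · rw [one_div, pow_mul]; ring
  · norm_num [Nat.factorial]; ring

lemma aux_odd_cos_sum (θ : ℝ) (hθ : θ ∈ Set.Icc (0:ℝ) π) :
    HasSum (fun n : ℕ => Real.cos ((2*(n:ℝ)+1)*θ) / (2*(n:ℝ)+1)^2)
      (π^2/8 - π*θ/4) := by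
  have hπ : (0:ℝ) < π := pi_pos
  set x : ℝ := θ/(2*π) with hxdef
  have hx2 : 2*π*x = θ := by rw [hxdef]; field_simp
  have hx : x ∈ Set.Icc (0:ℝ) 1 := by
    constructor
    · exact div_nonneg hθ.1 (by positivity)
    · rw [hxdef, div_le_one (by positivity)]; nlinarith [hθ.2]
  have hx' : (2*x) ∈ Set.Icc (0:ℝ) 1 := by
    constructor
    · have := div_nonneg hθ.1 (le_of_lt (by positivity : (0:ℝ) < 2*π))
      rw [hxdef]; linarith
    · rw [hxdef, show 2*(θ/(2*π)) = θ/π by field_simp, div_le_one hπ]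
      exact hθ.2
  have h1 := aux_cos_sum x hx
  have h2 := aux_cos_sum (2*x) hx'
  -- even part
  have heven : HasSum (fun n : ℕ => Real.cos (2*π*(2*(n:ℝ))*x) / (2*(n:ℝ))^2)
      (π^2 * ((2*x)^2 - 2*x + 1/6) / 4) := by
    convert h2.div_const 4 using 2 with n
    · rfl
    rw [div_div]
    congr 1
    · ring_nf
    · ring
  -- odd part summable
  have hodd_summable : Summable (fun n : ℕ => Real.cos (2*π*(2*(n:ℝ)+1)*x) / (2*(n:ℝ)+1)^2) := by
    apply Summable.of_abs
    apply Summable.of_nonneg_of_le (fun n => abs_nonneg _)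
      (fun n => ?_) (((summable_nat_add_iff 1).2 (Real.summable_one_div_nat_pow.2 one_lt_two)))
    rw [abs_div, abs_of_nonneg (by positivity : (0:ℝ) ≤ (2*(n:ℝ)+1)^2)]
    apply div_le_div₀ (by positivity) (abs_cos_le_one _) (by positivity)
    push_cast
    nlinarith [Nat.cast_nonneg (α := ℝ) n]
  have hodd := hodd_summable.hasSum
  have hsplit := HasSum.even_add_odd (f := fun n : ℕ => Real.cos (2*π*n*x) / (n:ℝ)^2)
    (by convert heven using 2 with n; push_cast; ring_nf)
    (by convert hodd using 2 with n; push_cast; ring_nf)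
  have hval := hsplit.unique h1
  have hO : (∑' n : ℕ, Real.cos (2*π*(2*(n:ℝ)+1)*x) / (2*(n:ℝ)+1)^2)
      = π^2/8 - π*θ/4 := by
    have : π^2 * x = π * θ / 2 := by rw [hxdef]; field_simp
    nlinarith [hval, this]
  rw [hO] at hodd
  convert hodd using 2 with n
  rw [← hx2]; ring_nf

/-- Covariance of Brownian motion via the Dirichlet–Neumann sine eigenbasis: for
`s, t ∈ [0, π/2]`, `∑ₙ sin((2n+1)t) sin((2n+1)s)/(2n+1)² = (π/4)·min(s,t)`. -/
theorem stmt18 (s t : ℝ) (hs : s ∈ Set.Icc 0 (Real.pi / 2))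
    (ht : t ∈ Set.Icc 0 (Real.pi / 2)) :
    Summable (fun n : ℕ =>
      Real.sin ((2 * (n : ℝ) + 1) * t) * Real.sin ((2 * (n : ℝ) + 1) * s)
        / (2 * (n : ℝ) + 1) ^ 2) ∧
    (∑' n : ℕ,
      Real.sin ((2 * (n : ℝ) + 1) * t) * Real.sin ((2 * (n : ℝ) + 1) * s)
        / (2 * (n : ℝ) + 1) ^ 2) = (Real.pi / 4) * min s t := by
  wlog h : s ≤ t with H
  · obtain ⟨h1, h2⟩ := H t s ht hs (le_of_not_ge h)
    constructor
    · convert h1 using 2 with n; rw [mul_comm]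
    · rw [show (fun n : ℕ => Real.sin ((2 * (n : ℝ) + 1) * t) * Real.sin ((2 * (n : ℝ) + 1) * s)
        / (2 * (n : ℝ) + 1) ^ 2) = (fun n : ℕ => Real.sin ((2 * (n : ℝ) + 1) * s) *
        Real.sin ((2 * (n : ℝ) + 1) * t) / (2 * (n : ℝ) + 1) ^ 2) from funext fun n => by
          rw [mul_comm], h2, min_comm]
  obtain ⟨hs0, hs2⟩ := hs
  obtain ⟨ht0, ht2⟩ := ht
  have h1 := aux_odd_cos_sum (t - s) ⟨by linarith, by linarith⟩
  have h2 := aux_odd_cos_sum (t + s) ⟨by linarith, by linarith⟩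
  have key := (h1.sub h2).div_const 2
  have hkey : HasSum (fun n : ℕ =>
      Real.sin ((2 * (n : ℝ) + 1) * t) * Real.sin ((2 * (n : ℝ) + 1) * s)
        / (2 * (n : ℝ) + 1) ^ 2) (π / 4 * s) := by
    convert key using 1
    · rfl
    · funext n
      rw [show (2*(n:ℝ)+1)*(t-s) = (2*(n:ℝ)+1)*t - (2*(n:ℝ)+1)*s by ring,
        show (2*(n:ℝ)+1)*(t+s) = (2*(n:ℝ)+1)*t + (2*(n:ℝ)+1)*s by ring,
        Real.cos_sub, Real.cos_add]
      ring
    · ring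
  rw [min_eq_left h]
  exact ⟨hkey.summable, hkey.tsum_eq⟩
end
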